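/- arXiv:1406.7681 — 4 statements merged into one kernel-verified Lean document; each statement's English description precedes it below -/
import Mathlib

section
/- Let N ∈ {5,6} and ξ ∈ ℝ^N. Let δ₁ = δ₁(λ) > 0 and δ₂ = δ₂(λ) > 0 with δ₂ = o(δ₁) as λ → 0, and set r = √(δ₁δ₂). Then λ ∫_{B_r(ξ)} U_{δ₂,ξ}² dx = a₁ λ δ₂² + O( λ δ₂² (δ₂/δ₁)^{(N−4)/2} ) as λ → 0, where a₁ = α_N² ∫_{ℝ^N} (1+|y|²)^{−(N−2)} dy. -/
open MeasureTheory Filter Topology Asymptotics Set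
open scoped RealInnerProductSpace ENNReal NNReal

noncomputable section

abbrev Euc (N : ℕ) := EuclideanSpace ℝ (Fin N)

/-- The constant `α_N = (N(N-2))^((N-2)/4)`. -/
def bubbleConst (N : ℕ) : ℝ := ((N : ℝ) * ((N : ℝ) - 2)) ^ (((N : ℝ) - 2) / 4)

/-- The standard bubble `U_{δ,ξ}`. -/
def stdBubble (N : ℕ) (δ : ℝ) (ξ x : Euc N) : ℝ :=
  bubbleConst N * δ ^ (((N : ℝ) - 2) / 2) / (δ ^ 2 + ‖x - ξ‖ ^ 2) ^ (((N : ℝ) - 2) / 2)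

/-- The Laplacian of `u : ℝ^N → ℝ`. -/
def lap {N : ℕ} (u : Euc N → ℝ) (x : Euc N) : ℝ :=
  ∑ i : Fin N, fderiv ℝ (fun y => fderiv ℝ u y (EuclideanSpace.single i 1)) x
    (EuclideanSpace.single i 1)

/-- `Ω` has smooth boundary: near each boundary point, `Ω` is the sublevel set of a smooth
function with nonvanishing gradient. -/
def HasSmoothBoundary {N : ℕ} (Ω : Set (Euc N)) : Prop :=
  ∀ x ∈ frontier Ω, ∃ (U : Set (Euc N)) (f : Euc N → ℝ),
    IsOpen U ∧ x ∈ U ∧ ContDiff ℝ (⊤ : ℕ∞) f ∧ (∀ y ∈ U, gradient f y ≠ 0) ∧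
    (Ω ∩ U = {y | y ∈ U ∧ f y < 0}) ∧ (frontier Ω ∩ U = {y | y ∈ U ∧ f y = 0})

/-- `ν` is the outer unit normal field on the boundary of `Ω`. -/
def IsOuterNormal {N : ℕ} (Ω : Set (Euc N)) (ν : Euc N → Euc N) : Prop :=
  ∀ x ∈ frontier Ω, ∃ (U : Set (Euc N)) (f : Euc N → ℝ),
    IsOpen U ∧ x ∈ U ∧ ContDiff ℝ (⊤ : ℕ∞) f ∧ gradient f x ≠ 0 ∧
    (Ω ∩ U = {y | y ∈ U ∧ f y < 0}) ∧ (frontier Ω ∩ U = {y | y ∈ U ∧ f y = 0}) ∧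
    ν x = ‖gradient f x‖⁻¹ • gradient f x

/-- The critical exponent `p = (N+2)/(N-2)`. -/
def critExp (N : ℕ) : ℝ := ((N : ℝ) + 2) / ((N : ℝ) - 2)

/-- `P` is the projection `PU_{δ,ξ}` of the bubble onto `H¹₀(Ω)`:
`-Δ P = U_{δ,ξ}^p` in `Ω`, `P = 0` on `∂Ω`. -/
def IsProjBubble {N : ℕ} (Ω : Set (Euc N)) (δ : ℝ) (ξ : Euc N) (P : Euc N → ℝ) : Prop :=
  ContDiffOn ℝ 2 P Ω ∧ ContinuousOn P (closure Ω) ∧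
  (∀ x ∈ Ω, - lap P x = stdBubble N δ ξ x ^ critExp N) ∧
  (∀ x ∈ frontier Ω, P x = 0)

/-- `u` is a solution of the Brezis–Nirenberg problem on `Ω` with parameter `lam`. -/
def IsBNSol {N : ℕ} (Ω : Set (Euc N)) (lam : ℝ) (u : Euc N → ℝ) : Prop :=
  ContDiffOn ℝ 2 u Ω ∧ ContinuousOn u (closure Ω) ∧
  (∀ x ∈ Ω, - lap u x = lam * u x + |u x| ^ ((4 : ℝ) / ((N : ℝ) - 2)) * u x) ∧
  (∀ x ∈ frontier Ω, u x = 0)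

/-- `g lam = o(h lam)` uniformly on compact subsets of `Ω`, as `lam → 0⁺`. -/
def LittleOUniformOnCompacts {N : ℕ} (Ω : Set (Euc N)) (g : ℝ → Euc N → ℝ) (h : ℝ → ℝ) : Prop :=
  ∀ K : Set (Euc N), K ⊆ Ω → IsCompact K → ∀ ε > 0,
    ∀ᶠ lam in 𝓝[>] (0 : ℝ), ∀ x ∈ K, |g lam x| ≤ ε * h lam

/-- measure of the unit sphere `S^{N-1}` -/
def omegaN (N : ℕ) : ℝ := (μH[((N : ℝ) - 1)] (Metric.sphere (0 : Euc N) 1)).toReal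


open scoped Pointwise

lemma finrank_euc (N : ℕ) : Module.finrank ℝ (Euc N) = N := by
  simp [finrank_euclideanSpace]

lemma g_integrable (N : ℕ) (hN4 : 4 < N) :
    Integrable (fun y : Euc N => (1 + ‖y‖ ^ 2) ^ (-((N : ℝ) - 2))) := by
  have hN4' : (4 : ℝ) < N := by exact_mod_cast hN4
  have h := integrable_rpow_neg_one_add_norm_sq (E := Euc N) (μ := volume)
    (r := 2 * ((N : ℝ) - 2)) (by rw [finrank_euc]; linarith)
  simpa [show -(2 * ((N : ℝ) - 2)) / 2 = -((N : ℝ) - 2) by ring] using h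

lemma tail_bound (N : ℕ) (hN4 : 4 < N) :
    ∃ Ct : ℝ, 0 ≤ Ct ∧ ∀ R : ℝ, 0 < R →
      ∫ y in (Metric.ball (0 : Euc N) R)ᶜ, (1 + ‖y‖ ^ 2) ^ (-((N : ℝ) - 2)) ≤
        Ct * R ^ (-((N : ℝ) - 4)) := by
  have hN4' : (4 : ℝ) < N := by exact_mod_cast hN4
  haveI : Nonempty (Fin N) := ⟨⟨0, by omega⟩⟩
  haveI : Nontrivial (Euc N) := by
    have : 0 < Module.finrank ℝ (Euc N) := by rw [finrank_euc]; omega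
    exact Module.nontrivial_of_finrank_pos this
  set cB : ℝ := (volume (Metric.ball (0 : Euc N) 1)).toReal with hcB
  have hcB0 : 0 ≤ cB := ENNReal.toReal_nonneg
  refine ⟨(N : ℝ) * cB / ((N : ℝ) - 4), div_nonneg (mul_nonneg (Nat.cast_nonneg N) hcB0) (by linarith), ?_⟩
  intro R hR
  set f : ℝ → ℝ := Set.indicator (Ici R) (fun t => (1 + t ^ 2) ^ (-((N : ℝ) - 2))) with hf
  have h1 : ∫ y in (Metric.ball (0 : Euc N) R)ᶜ, (1 + ‖y‖ ^ 2) ^ (-((N : ℝ) - 2))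
      = ∫ x : Euc N, f ‖x‖ := by
    rw [← integral_indicator measurableSet_ball.compl]
    congr 1
    funext x
    simp only [hf, Set.indicator_apply, Set.mem_compl_iff, Metric.mem_ball, dist_zero_right,
      not_lt, Set.mem_Ici]
    by_cases hx : R ≤ ‖x‖
    · rw [Set.indicator_of_mem (show x ∈ (Metric.ball (0 : Euc N) R)ᶜ by
        simpa [Metric.mem_ball, not_lt] using hx)
        (fun y => (1 + ‖y‖ ^ 2) ^ (-((N : ℝ) - 2))), if_pos hx]
    · rw [Set.indicator_of_notMem (show x ∉ (Metric.ball (0 : Euc N) R)ᶜ by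
        simpa [Metric.mem_ball, not_lt] using hx)
        (fun y => (1 + ‖y‖ ^ 2) ^ (-((N : ℝ) - 2))), if_neg hx]
  have h2 := MeasureTheory.integral_fun_norm_addHaar (volume : Measure (Euc N)) f
  rw [finrank_euc] at h2
  -- pointwise for the 1D integrand
  have hptw : ∀ y : ℝ, R < y →
      y ^ (N - 1) * (1 + y ^ 2) ^ (-((N : ℝ) - 2)) ≤ y ^ (-((N : ℝ) - 3)) := by
    intro y hy
    have hy0 : 0 < y := hR.trans hy
    have hb : ((y : ℝ) ^ 2) ^ (-((N : ℝ) - 2)) ≥ (1 + y ^ 2) ^ (-((N : ℝ) - 2)) :=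
      Real.rpow_le_rpow_of_nonpos (by positivity) (by linarith) (by linarith)
    calc y ^ (N - 1) * (1 + y ^ 2) ^ (-((N : ℝ) - 2))
        ≤ y ^ (N - 1) * (y ^ 2) ^ (-((N : ℝ) - 2)) := by
          exact mul_le_mul_of_nonneg_left hb (by positivity)
      _ = y ^ (-((N : ℝ) - 3)) := by
          rw [← Real.rpow_natCast y (N - 1), ← Real.rpow_natCast y 2,
            ← Real.rpow_mul hy0.le, ← Real.rpow_add hy0]
          congr 1
          have : ((N - 1 : ℕ) : ℝ) = (N : ℝ) - 1 := by
            have : 1 ≤ N := by omega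
            push_cast [this]; ring
          rw [this]; push_cast; ring
  set φ : ℝ → ℝ := fun y => y ^ (N - 1) * (1 + y ^ 2) ^ (-((N : ℝ) - 2)) with hφ
  have h3 : ∫ y in Ioi (0 : ℝ), y ^ (N - 1) • f y = ∫ y in Ioi R, φ y := by
    have hyy : ∀ y : ℝ, y ^ (N - 1) • f y = Set.indicator (Ici R) φ y := by
      intro y
      by_cases hy : R ≤ y
      · rw [hf, Set.indicator_of_mem (Set.mem_Ici.mpr hy)
          (fun t => (1 + t ^ 2) ^ (-((N : ℝ) - 2))), Set.indicator_of_mem (Set.mem_Ici.mpr hy) φ]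
        simp [hφ, smul_eq_mul]
      · rw [hf, Set.indicator_of_notMem (by simpa using hy)
          (fun t => (1 + t ^ 2) ^ (-((N : ℝ) - 2))), Set.indicator_of_notMem (by simpa using hy) φ]
        simp
    simp_rw [hyy]
    rw [integral_indicator measurableSet_Ici, Measure.restrict_restrict measurableSet_Ici]
    have hIE : Ici R ∩ Ioi (0 : ℝ) = Ici R :=
      Set.inter_eq_left.mpr (fun y hy => lt_of_lt_of_le hR hy)
    rw [hIE, integral_Ici_eq_integral_Ioi]
  have hmaj : IntegrableOn (fun y : ℝ => y ^ (-((N : ℝ) - 3))) (Ioi R) volume :=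
    integrableOn_Ioi_rpow_of_lt (by linarith) hR
  have hφint : IntegrableOn φ (Ioi R) volume := by
    refine hmaj.mono' ?_ ?_
    · exact ((continuous_pow (N - 1)).mul ((continuous_const.add (continuous_pow 2)).rpow_const
        (fun y => Or.inl (show (1 : ℝ) + y ^ 2 ≠ 0 by positivity)))).aestronglyMeasurable
    · filter_upwards [ae_restrict_mem measurableSet_Ioi] with y hy
      have hy0 : (0 : ℝ) < y := hR.trans hy
      rw [Real.norm_eq_abs, abs_of_nonneg (mul_nonneg (pow_nonneg hy0.le _)
        (Real.rpow_nonneg (by positivity) _))]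
      exact hptw y hy
  have h4 : ∫ y in Ioi R, φ y ≤ ∫ y in Ioi R, y ^ (-((N : ℝ) - 3)) :=
    setIntegral_mono_on hφint hmaj measurableSet_Ioi (fun y hy => hptw y hy)
  have h5 : ∫ y in Ioi R, (y : ℝ) ^ (-((N : ℝ) - 3)) = R ^ (-((N : ℝ) - 4)) / ((N : ℝ) - 4) := by
    rw [integral_Ioi_rpow_of_lt (by linarith) hR,
      show -((N : ℝ) - 3) + 1 = -((N : ℝ) - 4) by ring, neg_div, div_neg, neg_neg]
  rw [h1, h2, nsmul_eq_mul, smul_eq_mul, h3, measureReal_def, ← hcB]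
  calc (N : ℝ) * (cB * ∫ y in Ioi R, φ y)
      ≤ (N : ℝ) * (cB * (R ^ (-((N : ℝ) - 4)) / ((N : ℝ) - 4))) :=
        mul_le_mul_of_nonneg_left (mul_le_mul_of_nonneg_left (h4.trans h5.le) hcB0)
          (Nat.cast_nonneg N)
    _ = (N : ℝ) * cB / ((N : ℝ) - 4) * R ^ (-((N : ℝ) - 4)) := by ring

lemma cov (N : ℕ) (hN2 : 2 < N) (ξ : Euc N) {δ : ℝ} (hδ : 0 < δ) (r : ℝ) :
    ∫ x in Metric.ball ξ r, stdBubble N δ ξ x ^ 2 =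
      bubbleConst N ^ 2 * δ ^ 2 *
        ∫ y in Metric.ball (0 : Euc N) (r / δ), (1 + ‖y‖ ^ 2) ^ (-((N : ℝ) - 2)) := by
  have hN2' : (2 : ℝ) < N := by exact_mod_cast hN2
  set n : ℝ := (N : ℝ) with hn
  set hfun : Euc N → ℝ := fun z => (δ ^ 2 + ‖z‖ ^ 2) ^ (-(n - 2)) with hhfun
  have hsq : ∀ x : Euc N, stdBubble N δ ξ x ^ 2
      = bubbleConst N ^ 2 * δ ^ (n - 2) * hfun (x - ξ) := by
    intro x
    have hb : (0 : ℝ) < δ ^ 2 + ‖x - ξ‖ ^ 2 := by positivity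
    rw [stdBubble, hhfun, div_pow, mul_pow]
    rw [← Real.rpow_natCast (δ ^ ((n - 2) / 2)) 2, ← Real.rpow_mul hδ.le]
    rw [← Real.rpow_natCast ((δ ^ 2 + ‖x - ξ‖ ^ 2) ^ ((n - 2) / 2)) 2, ← Real.rpow_mul hb.le]
    rw [show (n - 2) / 2 * ((2 : ℕ) : ℝ) = n - 2 by push_cast; ring]
    rw [div_eq_mul_inv, ← Real.rpow_neg hb.le]
  simp_rw [hsq]
  rw [integral_const_mul]
  have ht : ∫ x in Metric.ball ξ r, hfun (x - ξ) = ∫ z in Metric.ball (0 : Euc N) r, hfun z := by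
    rw [← integral_indicator measurableSet_ball, ← integral_indicator measurableSet_ball]
    have hind : ∀ x : Euc N, (Metric.ball ξ r).indicator (fun x => hfun (x - ξ)) x
        = (Metric.ball (0 : Euc N) r).indicator hfun (x - ξ) := by
      intro x
      by_cases hx : x ∈ Metric.ball ξ r
      · rw [Set.indicator_of_mem hx (fun x => hfun (x - ξ)), Set.indicator_of_mem
          (by simpa [Metric.mem_ball, dist_eq_norm, sub_zero] using hx) hfun]
      · rw [Set.indicator_of_notMem hx (fun x => hfun (x - ξ)), Set.indicator_of_notMem
          (by simpa [Metric.mem_ball, dist_eq_norm, sub_zero] using hx) hfun]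
    simp_rw [hind]
    exact integral_sub_right_eq_self ((Metric.ball (0 : Euc N) r).indicator hfun) ξ
  have hs := MeasureTheory.Measure.setIntegral_comp_smul_of_pos (volume : Measure (Euc N)) hfun
    (Metric.ball (0 : Euc N) (r / δ)) hδ
  rw [finrank_euc] at hs
  have hball : δ • Metric.ball (0 : Euc N) (r / δ) = Metric.ball (0 : Euc N) r := by
    rw [_root_.smul_ball hδ.ne', smul_zero]
    rw [Real.norm_of_nonneg hδ.le]
    field_simp
  rw [hball] at hs
  have hs' : ∫ z in Metric.ball (0 : Euc N) r, hfun z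
      = δ ^ N * ∫ y in Metric.ball (0 : Euc N) (r / δ), hfun (δ • y) := by
    rw [hs, smul_eq_mul, ← mul_assoc, mul_inv_cancel₀ (by positivity), one_mul]
  have hcomp : ∀ y : Euc N, hfun (δ • y) = δ ^ (-(2 * (n - 2))) * (1 + ‖y‖ ^ 2) ^ (-(n - 2)) := by
    intro y
    have hxx : δ ^ 2 + ‖δ • y‖ ^ 2 = δ ^ 2 * (1 + ‖y‖ ^ 2) := by
      rw [norm_smul, Real.norm_of_nonneg hδ.le]; ring
    show (δ ^ 2 + ‖δ • y‖ ^ 2) ^ (-(n - 2)) = _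
    rw [hxx, Real.mul_rpow (by positivity) (by positivity)]
    congr 1
    rw [← Real.rpow_natCast δ 2, ← Real.rpow_mul hδ.le]
    congr 1; push_cast; ring
  rw [ht, hs']
  simp_rw [hcomp]
  rw [integral_const_mul]
  have hδe : δ ^ (n - 2) * (δ ^ N * δ ^ (-(2 * (n - 2)))) = δ ^ 2 := by
    rw [← Real.rpow_natCast δ N, ← Real.rpow_add hδ, ← Real.rpow_add hδ,
      ← Real.rpow_natCast δ 2]
    congr 1; push_cast; ring
  calc bubbleConst N ^ 2 * δ ^ (n - 2) *
        (δ ^ N * (δ ^ (-(2 * (n - 2))) *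
          ∫ y in Metric.ball (0 : Euc N) (r / δ), (1 + ‖y‖ ^ 2) ^ (-(n - 2))))
      = bubbleConst N ^ 2 * (δ ^ (n - 2) * (δ ^ N * δ ^ (-(2 * (n - 2))))) *
          ∫ y in Metric.ball (0 : Euc N) (r / δ), (1 + ‖y‖ ^ 2) ^ (-(n - 2)) := by ring
    _ = _ := by rw [hδe]

/-- for `N ∈ {5,6}`,
`lam ∫_{B_r(ξ)} U_{δ₂,ξ}² dx = a₁ lam δ₂² + O(lam δ₂² (δ₂/δ₁)^{(N-4)/2})` as `lam → 0⁺`. -/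
theorem stmt14 (N : ℕ) (hN : N = 5 ∨ N = 6) (ξ : Euc N)
    (δ₁ δ₂ : ℝ → ℝ)
    (hpos : ∀ᶠ lam in 𝓝[>] (0 : ℝ), 0 < δ₁ lam ∧ 0 < δ₂ lam)
    (hδ : δ₂ =o[𝓝[>] (0 : ℝ)] δ₁) :
    ∃ C > (0 : ℝ), ∀ᶠ lam in 𝓝[>] (0 : ℝ),
      |lam * (∫ x in Metric.ball ξ (Real.sqrt (δ₁ lam * δ₂ lam)), stdBubble N (δ₂ lam) ξ x ^ 2)
          - (bubbleConst N ^ 2 * ∫ y : Euc N, (1 + ‖y‖ ^ 2) ^ (-((N : ℝ) - 2))) *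
              lam * δ₂ lam ^ 2| ≤
        C * lam * δ₂ lam ^ 2 * (δ₂ lam / δ₁ lam) ^ (((N : ℝ) - 4) / 2) := by
  have hN4 : 4 < N := by rcases hN with rfl | rfl <;> norm_num
  have hN4' : (4 : ℝ) < N := by exact_mod_cast hN4
  obtain ⟨Ct, hCt0, hCt⟩ := tail_bound N hN4
  have hCb : (0 : ℝ) ≤ bubbleConst N ^ 2 * Ct := mul_nonneg (sq_nonneg _) hCt0
  refine ⟨bubbleConst N ^ 2 * Ct + 1, by linarith, ?_⟩
  filter_upwards [hpos, self_mem_nhdsWithin] with lam hp hlam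
  obtain ⟨h1, h2⟩ := hp
  have hlam0 : (0 : ℝ) < lam := hlam
  set d1 := δ₁ lam with hd1
  set d2 := δ₂ lam with hd2
  set r : ℝ := Real.sqrt (d1 * d2) with hrdef
  have hrpos : 0 < r := Real.sqrt_pos.mpr (mul_pos h1 h2)
  set R : ℝ := r / d2 with hRdef
  have hRpos : 0 < R := div_pos hrpos h2
  set a : ℝ := ∫ y : Euc N, (1 + ‖y‖ ^ 2) ^ (-((N : ℝ) - 2)) with hadef
  set T : ℝ := ∫ y in (Metric.ball (0 : Euc N) R)ᶜ, (1 + ‖y‖ ^ 2) ^ (-((N : ℝ) - 2)) with hTdef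
  have hT0 : 0 ≤ T :=
    setIntegral_nonneg measurableSet_ball.compl (fun y _ => Real.rpow_nonneg (by positivity) _)
  have hcov := cov N (by omega) ξ h2 r
  rw [← hRdef] at hcov
  have hsplit := MeasureTheory.integral_add_compl
    (measurableSet_ball (x := (0 : Euc N)) (ε := R)) (g_integrable N hN4)
  have hball_eq : (∫ y in Metric.ball (0 : Euc N) R, (1 + ‖y‖ ^ 2) ^ (-((N : ℝ) - 2))) = a - T := by
    rw [hadef, hTdef]; linarith [hsplit]
  have hexp : lam * (∫ x in Metric.ball ξ r, stdBubble N d2 ξ x ^ 2)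
      - (bubbleConst N ^ 2 * a) * lam * d2 ^ 2
      = -(lam * bubbleConst N ^ 2 * d2 ^ 2 * T) := by
    rw [hcov, hball_eq]; ring
  rw [hexp, abs_neg, abs_of_nonneg (mul_nonneg (mul_nonneg (mul_nonneg hlam0.le
    (sq_nonneg _)) (sq_nonneg _)) hT0)]
  -- convert R ^ (-(N-4)) to (d2/d1) ^ ((N-4)/2)
  have htpos : (0 : ℝ) < d1 / d2 := div_pos h1 h2
  have hRs : R = Real.sqrt (d1 / d2) := by
    have hsq : R ^ 2 = d1 / d2 := by
      rw [hRdef, div_pow, hrdef, Real.sq_sqrt (mul_pos h1 h2).le, pow_two,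
        mul_div_mul_right _ _ h2.ne']
    rw [← hsq, Real.sqrt_sq hRpos.le]
  have key : R ^ (-((N : ℝ) - 4)) = (d2 / d1) ^ (((N : ℝ) - 4) / 2) := by
    rw [hRs, Real.sqrt_eq_rpow, ← Real.rpow_mul htpos.le,
      show 1 / 2 * -((N : ℝ) - 4) = -(((N : ℝ) - 4) / 2) by ring,
      Real.rpow_neg htpos.le, ← Real.inv_rpow htpos.le, inv_div]
  set X : ℝ := (d2 / d1) ^ (((N : ℝ) - 4) / 2) with hXdef
  have hX0 : (0 : ℝ) ≤ X := Real.rpow_nonneg (div_pos h2 h1).le _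
  have hTle : T ≤ Ct * X := by
    have := hCt R hRpos
    rwa [key] at this
  calc lam * bubbleConst N ^ 2 * d2 ^ 2 * T
      ≤ lam * bubbleConst N ^ 2 * d2 ^ 2 * (Ct * X) :=
        mul_le_mul_of_nonneg_left hTle
          (mul_nonneg (mul_nonneg hlam0.le (sq_nonneg _)) (sq_nonneg _))
    _ = (bubbleConst N ^ 2 * Ct) * (lam * d2 ^ 2 * X) := by ring
    _ ≤ (bubbleConst N ^ 2 * Ct + 1) * (lam * d2 ^ 2 * X) :=
        mul_le_mul_of_nonneg_right (by linarith)
          (mul_nonneg (mul_nonneg hlam0.le (sq_nonneg _)) hX0)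
    _ = (bubbleConst N ^ 2 * Ct + 1) * lam * d2 ^ 2 * X := by ring
end
end

section
/- Let N ≥ 5 and ξ ∈ ℝ^N. Let δ₁ = δ₁(λ) > 0 and δ₂ = δ₂(λ) > 0 with δ₂ = o(δ₁) as λ → 0, and set r = √(δ₁δ₂). Then λ ∫_{B_r(ξ)} U_{δ₁,ξ} U_{δ₂,ξ} dx = O( λ (δ₂/δ₁)^{N/2} δ₁² ) as λ → 0. -/
open MeasureTheory Filter Topology Asymptotics Set
open scoped RealInnerProductSpace ENNReal NNReal

noncomputable section

section Aux

open MeasureTheory Measure Set Metric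

/-- Polar coordinates for `lintegral`. -/
lemma lintegral_fun_norm_addHaar' {E : Type*} [NormedAddCommGroup E] [NormedSpace ℝ E]
    [MeasurableSpace E] [BorelSpace E] [Nontrivial E] [FiniteDimensional ℝ E]
    (μ : Measure E) [μ.IsAddHaarMeasure] (f : ℝ → ℝ≥0∞) (hf : Measurable f) :
    ∫⁻ x, f ‖x‖ ∂μ = (Module.finrank ℝ E : ℝ≥0∞) * μ (Metric.ball 0 1) *
      ∫⁻ y in Ioi (0 : ℝ), ENNReal.ofReal (y ^ (Module.finrank ℝ E - 1)) * f y := by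
  have hm : Measurable fun p : sphere (0 : E) 1 × Ioi (0 : ℝ) => f p.2 :=
    hf.comp (measurable_subtype_coe.comp measurable_snd)
  have hm2 : Measurable fun y : Ioi (0 : ℝ) => f y := hf.comp measurable_subtype_coe
  have hden : Measurable fun y : Ioi (0 : ℝ) =>
      ENNReal.ofReal ((y : ℝ) ^ (Module.finrank ℝ E - 1)) :=
    (measurable_subtype_coe.pow_const _).ennreal_ofReal
  calc
    ∫⁻ x, f ‖x‖ ∂μ = ∫⁻ x : ({(0)}ᶜ : Set E), f (‖x.1‖) ∂(μ.comap (↑)) := by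
      rw [lintegral_subtype_comap (measurableSet_singleton _).compl fun x => f ‖x‖,
        restrict_compl_singleton]
    _ = ∫⁻ p : sphere (0 : E) 1 × Ioi (0 : ℝ),
          f p.2 ∂(μ.toSphere.prod (.volumeIoiPow (Module.finrank ℝ E - 1))) :=
      by rw [← μ.measurePreserving_homeomorphUnitSphereProd.lintegral_comp hm]; simp
    _ = μ.toSphere univ *
        ∫⁻ y : Ioi (0 : ℝ), f y ∂(Measure.volumeIoiPow (Module.finrank ℝ E - 1)) := by
      rw [lintegral_prod _ hm.aemeasurable]
      simp [lintegral_const, mul_comm]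
    _ = _ := by
      rw [μ.toSphere_apply_univ, Measure.volumeIoiPow,
        lintegral_withDensity_eq_lintegral_mul _ hden hm2]
      have : ∫⁻ y : Ioi (0 : ℝ),
          ((fun y : Ioi (0:ℝ) => ENNReal.ofReal ((y:ℝ) ^ (Module.finrank ℝ E - 1))) *
            fun y : Ioi (0:ℝ) => f y) y ∂(comap Subtype.val volume) =
          ∫⁻ y in Ioi (0:ℝ), ENNReal.ofReal (y ^ (Module.finrank ℝ E - 1)) * f y := by
        exact lintegral_subtype_comap measurableSet_Ioi
          (fun y => ENNReal.ofReal (y ^ (Module.finrank ℝ E - 1)) * f y)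
      rw [this]

end Aux

section Key

open MeasureTheory Measure Set Metric Real

lemma bubbleConst_pos {N : ℕ} (hN : 5 ≤ N) : 0 < bubbleConst N := by
  have h5 : (5 : ℝ) ≤ (N : ℝ) := by exact_mod_cast hN
  exact Real.rpow_pos_of_pos (by nlinarith) _

lemma stdBubble_pos {N : ℕ} (hN : 5 ≤ N) {δ : ℝ} (hδ : 0 < δ) (ξ x : Euc N) :
    0 < stdBubble N δ ξ x := by
  have h5 : (5 : ℝ) ≤ (N : ℝ) := by exact_mod_cast hN
  have h1 : 0 < δ ^ (((N : ℝ) - 2) / 2) := Real.rpow_pos_of_pos hδ _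
  have h2 : (0:ℝ) < δ ^ 2 + ‖x - ξ‖ ^ 2 := by positivity
  have h3 : 0 < (δ ^ 2 + ‖x - ξ‖ ^ 2) ^ (((N : ℝ) - 2) / 2) := Real.rpow_pos_of_pos h2 _
  exact div_pos (mul_pos (bubbleConst_pos hN) h1) h3

lemma key_bound (N : ℕ) (hN : 5 ≤ N) (ξ : Euc N) (δ₁ δ₂ : ℝ) (h1 : 0 < δ₁) (h2 : 0 < δ₂) :
    |∫ x in Metric.ball ξ (Real.sqrt (δ₁ * δ₂)), stdBubble N δ₁ ξ x * stdBubble N δ₂ ξ x| ≤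
      ((N : ℝ) * (volume (Metric.ball (0 : Euc N) 1)).toReal * bubbleConst N ^ 2 / 2) *
        (δ₂ / δ₁) ^ ((N : ℝ) / 2) * δ₁ ^ 2 := by
  have h5 : (5 : ℝ) ≤ (N : ℝ) := by exact_mod_cast hN
  set q : ℝ := ((N : ℝ) - 2) / 2 with hq_def
  have hq : 0 < q := by unfold q; linarith
  have hα := bubbleConst_pos hN
  set α := bubbleConst N
  set r : ℝ := Real.sqrt (δ₁ * δ₂) with hr_def
  have hr : 0 < r := Real.sqrt_pos.2 (mul_pos h1 h2)
  have hr2 : r ^ 2 = δ₁ * δ₂ := Real.sq_sqrt (mul_pos h1 h2).le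
  set C₀ : ℝ := α ^ 2 * (δ₂ / δ₁) ^ q with hC₀_def
  have hC₀ : 0 ≤ C₀ := by
    have := Real.rpow_pos_of_pos (div_pos h2 h1) q
    positivity
  -- pointwise bound
  have hpt : ∀ x : Euc N, x ≠ ξ →
      stdBubble N δ₁ ξ x * stdBubble N δ₂ ξ x ≤ C₀ * ‖x - ξ‖ ^ ((2:ℝ) - N) := by
    intro x hx
    set d : ℝ := ‖x - ξ‖ with hd_def
    have hd : 0 < d := by
      simp only [hd_def, norm_pos_iff]
      exact sub_ne_zero.2 hx
    have sq_rpow : ∀ a : ℝ, 0 < a → (a ^ 2 : ℝ) ^ q = a ^ q * a ^ q := by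
      intro a ha
      rw [← Real.rpow_natCast a 2, ← Real.rpow_mul ha.le, ← Real.rpow_add ha]
      norm_num
      ring_nf
    have hb1 : stdBubble N δ₁ ξ x ≤ α / δ₁ ^ q := by
      have hdenle : δ₁ ^ q * δ₁ ^ q ≤ (δ₁ ^ 2 + d ^ 2) ^ q := by
        rw [← sq_rpow δ₁ h1]
        exact Real.rpow_le_rpow (by positivity) (by nlinarith) hq.le
      have h0 : 0 < δ₁ ^ q := Real.rpow_pos_of_pos h1 _
      calc stdBubble N δ₁ ξ x = α * δ₁ ^ q / (δ₁ ^ 2 + d ^ 2) ^ q := rfl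
        _ ≤ α * δ₁ ^ q / (δ₁ ^ q * δ₁ ^ q) :=
            div_le_div_of_nonneg_left (by positivity) (by positivity) hdenle
        _ = α / δ₁ ^ q := mul_div_mul_right _ _ h0.ne'
    have hb2 : stdBubble N δ₂ ξ x ≤ α * δ₂ ^ q / (d ^ q * d ^ q) := by
      have hdenle : d ^ q * d ^ q ≤ (δ₂ ^ 2 + d ^ 2) ^ q := by
        rw [← sq_rpow d hd]
        exact Real.rpow_le_rpow (by positivity) (by nlinarith) hq.le
      exact div_le_div_of_nonneg_left (by positivity) (by positivity) hdenle
    have hprod : stdBubble N δ₁ ξ x * stdBubble N δ₂ ξ x ≤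
        (α / δ₁ ^ q) * (α * δ₂ ^ q / (d ^ q * d ^ q)) := by
      have hp2 := (stdBubble_pos hN h2 ξ x).le
      have : 0 ≤ α / δ₁ ^ q := by positivity
      exact mul_le_mul hb1 hb2 hp2 this
    refine hprod.trans_eq ?_
    have hdq : 0 < d ^ q := Real.rpow_pos_of_pos hd _
    have hneg : d ^ ((2:ℝ) - N) = (d ^ q * d ^ q)⁻¹ := by
      have e : (2:ℝ) - N = -(q + q) := by unfold q; ring
      rw [e, Real.rpow_neg hd.le, Real.rpow_add hd]
    have hdiv : ((δ₂ / δ₁) : ℝ) ^ q = δ₂ ^ q / δ₁ ^ q := Real.div_rpow h2.le h1.le q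
    rw [hC₀_def, hneg, hdiv]
    have h01 : (δ₁:ℝ) ^ q ≠ 0 := (Real.rpow_pos_of_pos h1 _).ne'
    field_simp
  -- the indicator radial majorant
  set F : ℝ → ℝ≥0∞ := fun y =>
    Set.indicator (Ioo (0:ℝ) r) (fun y => ENNReal.ofReal (C₀ * y ^ ((2:ℝ) - N))) y with hF_def
  have hF : Measurable F := by
    apply Measurable.indicator _ measurableSet_Ioo
    have : Measurable fun y : ℝ => y ^ ((2:ℝ) - N) := by measurability
    exact (this.const_mul C₀).ennreal_ofReal

  haveI : Nontrivial (Euc N) := by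
    refine Module.nontrivial_of_finrank_pos (R := ℝ) (?_ : 0 < Module.finrank ℝ (Euc N))
    rw [finrank_euclideanSpace_fin]; omega
  -- identify the majorant with a radial function
  have hind : ∀ x : Euc N,
      Set.indicator (Metric.ball ξ r) (fun x => ENNReal.ofReal (C₀ * ‖x - ξ‖ ^ ((2:ℝ) - N))) x
        = F ‖x - ξ‖ := by
    intro x
    by_cases hx : x = ξ
    · subst hx
      have hne : (2:ℝ) - N ≠ 0 := by intro h; nlinarith
      simp [F, Set.indicator, Metric.mem_ball, hr, Real.zero_rpow hne]
    · have hd : 0 < ‖x - ξ‖ := by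
        simp only [norm_pos_iff]; exact sub_ne_zero.2 hx
      simp only [F, Set.indicator, Metric.mem_ball, dist_eq_norm, Set.mem_Ioo]
      by_cases hxr : ‖x - ξ‖ < r <;> simp [hxr, hd]
  have hcomp : ∫⁻ x in Metric.ball ξ r, ENNReal.ofReal (C₀ * ‖x - ξ‖ ^ ((2:ℝ) - N)) ∂volume
      = ∫⁻ x : Euc N, F ‖x - ξ‖ ∂volume := by
    rw [← lintegral_indicator measurableSet_ball]
    exact lintegral_congr hind
  have htrans : ∫⁻ x : Euc N, F ‖x - ξ‖ ∂volume = ∫⁻ x : Euc N, F ‖x‖ ∂volume := by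
    simpa [sub_eq_add_neg] using
      lintegral_add_right_eq_self (μ := (volume : Measure (Euc N))) (fun x => F ‖x‖) (-ξ)
  have hpolar : ∫⁻ x : Euc N, F ‖x‖ ∂volume =
      (N : ℝ≥0∞) * volume (Metric.ball (0 : Euc N) 1) *
        ∫⁻ y in Ioi (0:ℝ), ENNReal.ofReal (y ^ (N - 1)) * F y := by
    have h := lintegral_fun_norm_addHaar' (volume : Measure (Euc N)) F hF
    rwa [finrank_euclideanSpace_fin] at h
  have hradial : ∫⁻ y in Ioi (0:ℝ), ENNReal.ofReal (y ^ (N - 1)) * F y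
      = ENNReal.ofReal (C₀ * (δ₁ * δ₂) / 2) := by
    have hsub : Ioo (0:ℝ) r ⊆ Ioi 0 := Ioo_subset_Ioi_self
    have e1 : ∀ y : ℝ, ENNReal.ofReal (y ^ (N - 1)) * F y
        = Set.indicator (Ioo (0:ℝ) r) (fun y => ENNReal.ofReal (C₀ * y)) y := by
      intro y
      by_cases hy : y ∈ Ioo (0:ℝ) r
      · have hy0 : 0 < y := hy.1
        simp only [F, Set.indicator_of_mem hy]
        rw [← ENNReal.ofReal_mul (by positivity)]
        congr 1
        have hnat : (y : ℝ) ^ (N - 1) = y ^ (((N:ℝ)) - 1) := by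
          rw [← Real.rpow_natCast y (N - 1)]
          congr 1
          have h1N : (1:ℕ) ≤ N := by omega
          push_cast [Nat.cast_sub h1N]
          ring
        have he : ((N:ℝ) - 1) + ((2:ℝ) - N) = 1 := by ring
        calc y ^ (N - 1) * (C₀ * y ^ ((2:ℝ) - N))
            = C₀ * (y ^ (((N:ℝ)) - 1) * y ^ ((2:ℝ) - N)) := by rw [hnat]; ring
          _ = C₀ * y := by rw [← Real.rpow_add hy0, he, Real.rpow_one]
      · simp [F, Set.indicator_of_notMem hy]
    calc ∫⁻ y in Ioi (0:ℝ), ENNReal.ofReal (y ^ (N - 1)) * F y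
        = ∫⁻ y in Ioi (0:ℝ),
            Set.indicator (Ioo (0:ℝ) r) (fun y => ENNReal.ofReal (C₀ * y)) y :=
          lintegral_congr fun y => e1 y
      _ = ∫⁻ y in Ioo (0:ℝ) r, ENNReal.ofReal (C₀ * y) := by
          rw [lintegral_indicator measurableSet_Ioo, Measure.restrict_restrict measurableSet_Ioo,
            inter_eq_left.2 hsub]
      _ = ENNReal.ofReal (∫ y in Ioo (0:ℝ) r, C₀ * y) := by
          rw [← ofReal_integral_eq_lintegral_ofReal]
          · exact (((continuous_const.mul continuous_id).continuousOn
              (s := Icc (0:ℝ) r)).integrableOn_compact isCompact_Icc).mono_set Ioo_subset_Icc_self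
          · filter_upwards [ae_restrict_mem measurableSet_Ioo] with y hy
            have hy0 : 0 < y := hy.1
            have := hC₀
            positivity
      _ = ENNReal.ofReal (C₀ * (δ₁ * δ₂) / 2) := by
          congr 1
          have hid : ∫ y in Ioo (0:ℝ) r, y = (δ₁ * δ₂) / 2 := by
            rw [← integral_Ioc_eq_integral_Ioo, ← intervalIntegral.integral_of_le hr.le,
              integral_id]
            rw [← hr2]; ring
          rw [integral_const_mul, hid]
          ring
  -- assemble
  have hnn : ∀ x : Euc N, 0 ≤ stdBubble N δ₁ ξ x * stdBubble N δ₂ ξ x := fun x =>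
    mul_nonneg (stdBubble_pos hN h1 ξ x).le (stdBubble_pos hN h2 ξ x).le
  have hstep1 : |∫ x in Metric.ball ξ r, stdBubble N δ₁ ξ x * stdBubble N δ₂ ξ x| ≤
      (∫⁻ x in Metric.ball ξ r,
        ENNReal.ofReal (stdBubble N δ₁ ξ x * stdBubble N δ₂ ξ x)).toReal := by
    calc |∫ x in Metric.ball ξ r, stdBubble N δ₁ ξ x * stdBubble N δ₂ ξ x|
        = ‖∫ x in Metric.ball ξ r, stdBubble N δ₁ ξ x * stdBubble N δ₂ ξ x‖ :=
          (Real.norm_eq_abs _).symm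
      _ ≤ (∫⁻ x in Metric.ball ξ r,
            ENNReal.ofReal ‖stdBubble N δ₁ ξ x * stdBubble N δ₂ ξ x‖).toReal :=
          norm_integral_le_lintegral_norm _
      _ = (∫⁻ x in Metric.ball ξ r,
            ENNReal.ofReal (stdBubble N δ₁ ξ x * stdBubble N δ₂ ξ x)).toReal := by
          congr 1
          exact lintegral_congr fun x => by rw [Real.norm_eq_abs, abs_of_nonneg (hnn x)]
  have hstep2 : ∫⁻ x in Metric.ball ξ r,
        ENNReal.ofReal (stdBubble N δ₁ ξ x * stdBubble N δ₂ ξ x)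
      ≤ ∫⁻ x in Metric.ball ξ r, ENNReal.ofReal (C₀ * ‖x - ξ‖ ^ ((2:ℝ) - N)) := by
    refine lintegral_mono_ae ?_
    have hane : ∀ᵐ x ∂(volume : Measure (Euc N)), x ≠ ξ := by
      refine (ae_iff).2 ?_
      convert measure_singleton (μ := (volume : Measure (Euc N))) ξ using 2
      ext x; simp
    filter_upwards [ae_restrict_of_ae hane] with x hx
    exact ENNReal.ofReal_le_ofReal (hpt x hx)
  have hC₀' : (0:ℝ) ≤ C₀ * (δ₁ * δ₂) / 2 :=
    div_nonneg (mul_nonneg hC₀ (mul_pos h1 h2).le) (by norm_num)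
  have hEQ : ∫⁻ x in Metric.ball ξ r, ENNReal.ofReal (C₀ * ‖x - ξ‖ ^ ((2:ℝ) - N))
      = (N : ℝ≥0∞) * volume (Metric.ball (0 : Euc N) 1) *
        ENNReal.ofReal (C₀ * (δ₁ * δ₂) / 2) := by
    rw [hcomp, htrans, hpolar, hradial]
  have hLne : (N : ℝ≥0∞) * volume (Metric.ball (0 : Euc N) 1) *
      ENNReal.ofReal (C₀ * (δ₁ * δ₂) / 2) ≠ ⊤ :=
    ENNReal.mul_ne_top (ENNReal.mul_ne_top (ENNReal.natCast_ne_top _) measure_ball_lt_top.ne)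
      ENNReal.ofReal_ne_top
  calc |∫ x in Metric.ball ξ r, stdBubble N δ₁ ξ x * stdBubble N δ₂ ξ x|
      ≤ (∫⁻ x in Metric.ball ξ r,
          ENNReal.ofReal (stdBubble N δ₁ ξ x * stdBubble N δ₂ ξ x)).toReal := hstep1
    _ ≤ ((N : ℝ≥0∞) * volume (Metric.ball (0 : Euc N) 1) *
          ENNReal.ofReal (C₀ * (δ₁ * δ₂) / 2)).toReal :=
        ENNReal.toReal_mono hLne (hstep2.trans_eq hEQ)
    _ = (N : ℝ) * (volume (Metric.ball (0 : Euc N) 1)).toReal * (C₀ * (δ₁ * δ₂) / 2) := by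
        simp [ENNReal.toReal_mul, ENNReal.toReal_ofReal hC₀']
    _ = ((N : ℝ) * (volume (Metric.ball (0 : Euc N) 1)).toReal * α ^ 2 / 2) *
          (δ₂ / δ₁) ^ ((N : ℝ) / 2) * δ₁ ^ 2 := by
        rw [hC₀_def]
        have hsplit : ((δ₂ / δ₁) : ℝ) ^ ((N:ℝ)/2) = (δ₂/δ₁) ^ q * (δ₂/δ₁) := by
          have he : (N:ℝ)/2 = q + 1 := by unfold q; ring
          rw [he, Real.rpow_add (div_pos h2 h1), Real.rpow_one]
        rw [hsplit]
        field_simp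


end Key


/-- for `N ≥ 5`,
`lam ∫_{B_r(ξ)} U_{δ₁,ξ} U_{δ₂,ξ} dx = O(lam (δ₂/δ₁)^{N/2} δ₁²)` as `lam → 0⁺`. -/
theorem stmt15 (N : ℕ) (hN : 5 ≤ N) (ξ : Euc N)
    (δ₁ δ₂ : ℝ → ℝ)
    (hpos : ∀ᶠ lam in 𝓝[>] (0 : ℝ), 0 < δ₁ lam ∧ 0 < δ₂ lam)
    (hδ : δ₂ =o[𝓝[>] (0 : ℝ)] δ₁) :
    ∃ C > (0 : ℝ), ∀ᶠ lam in 𝓝[>] (0 : ℝ),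
      |lam * ∫ x in Metric.ball ξ (Real.sqrt (δ₁ lam * δ₂ lam)),
          stdBubble N (δ₁ lam) ξ x * stdBubble N (δ₂ lam) ξ x| ≤
        C * lam * (δ₂ lam / δ₁ lam) ^ ((N : ℝ) / 2) * δ₁ lam ^ 2 := by
  have hball : (0 : ℝ≥0∞) < volume (Metric.ball (0 : Euc N) 1) := by
    haveI : Nontrivial (Euc N) := by
      refine Module.nontrivial_of_finrank_pos (R := ℝ) (?_ : 0 < Module.finrank ℝ (Euc N))
      rw [finrank_euclideanSpace_fin]; omega
    exact Metric.measure_ball_pos _ _ one_pos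
  set C : ℝ := (N : ℝ) * (volume (Metric.ball (0 : Euc N) 1)).toReal * bubbleConst N ^ 2 / 2
    with hC_def
  have hC : 0 < C := by
    have h1 : 0 < (volume (Metric.ball (0 : Euc N) 1)).toReal :=
      ENNReal.toReal_pos hball.ne' measure_ball_lt_top.ne
    have h2 := bubbleConst_pos hN
    have h3 : (0:ℝ) < N := by positivity
    rw [hC_def]; positivity
  refine ⟨C, hC, ?_⟩
  filter_upwards [hpos, self_mem_nhdsWithin] with lam hpd hl
  have hl' : (0:ℝ) < lam := hl
  have hk := key_bound N hN ξ (δ₁ lam) (δ₂ lam) hpd.1 hpd.2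
  rw [abs_mul, abs_of_pos hl']
  calc lam * |∫ x in Metric.ball ξ (Real.sqrt (δ₁ lam * δ₂ lam)),
        stdBubble N (δ₁ lam) ξ x * stdBubble N (δ₂ lam) ξ x|
      ≤ lam * (C * (δ₂ lam / δ₁ lam) ^ ((N : ℝ) / 2) * δ₁ lam ^ 2) :=
        mul_le_mul_of_nonneg_left hk hl'.le
    _ = C * lam * (δ₂ lam / δ₁ lam) ^ ((N : ℝ) / 2) * δ₁ lam ^ 2 := by ring
end
end

section
/- Let N ≥ 3 and ξ ∈ ℝ^N. Let δ₁ = δ₁(λ) > 0 and δ₂ = δ₂(λ) > 0 with δ₂ = o(δ₁) as λ → 0, and set r = √(δ₁δ₂). Then ∫_{∂B_r(ξ)} |∇U_{δ₂,ξ}|² |x−ξ| dσ = α_N² (N−2)² ω_N (δ₂/δ₁)^{(N−2)/2} + O( (δ₂/δ₁)^{N/2} ) and ∫_{∂B_r(ξ)} (∇U_{δ₁,ξ} · ∇U_{δ₂,ξ}) |x−ξ| dσ = α_N² (N−2)² ω_N (δ₂/δ₁)^{N/2} + O( (δ₂/δ₁)^{(N+2)/2} ) as λ → 0, where ω_N is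 the (N−1)-dimensional measure of the unit sphere S^{N−1}. -/
open MeasureTheory Filter Topology Asymptotics Set
open scoped RealInnerProductSpace ENNReal NNReal
open scoped Pointwise

noncomputable section

lemma hasGradientAt_stdBubble (N : ℕ) (δ : ℝ) (hδ : 0 < δ) (ξ x : Euc N) :
    HasGradientAt (stdBubble N δ ξ)
      ((-(bubbleConst N * δ ^ (((N:ℝ)-2)/2) * ((N:ℝ)-2)) *
        (δ^2 + ‖x-ξ‖^2) ^ (-(N:ℝ)/2)) • (x - ξ)) x := by
  set C : ℝ := bubbleConst N * δ ^ (((N:ℝ)-2)/2) with hC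
  set α : ℝ := ((N:ℝ)-2)/2 with hα
  have hs : (0:ℝ) < δ^2 + ‖x-ξ‖^2 := by positivity
  -- inner derivative
  have hid : HasFDerivAt (fun y : Euc N => y - ξ) (ContinuousLinearMap.id ℝ (Euc N)) x :=
    (hasFDerivAt_id x).sub_const ξ
  have hq : HasFDerivAt (fun y : Euc N => δ^2 + ‖y-ξ‖^2)
      ((fderivInnerCLM ℝ (x-ξ, x-ξ)).comp
        ((ContinuousLinearMap.id ℝ (Euc N)).prod (ContinuousLinearMap.id ℝ (Euc N)))) x := by
    have h1 := (hid.inner ℝ hid).const_add (δ^2)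
    have : (fun y : Euc N => δ^2 + ⟪y - ξ, y - ξ⟫) = fun y : Euc N => δ^2 + ‖y-ξ‖^2 := by
      funext y; rw [real_inner_self_eq_norm_sq]
    rwa [this] at h1
  -- outer derivative
  have hφ : HasDerivAt (fun s : ℝ => C / s ^ α)
      (-(C*α) * (δ^2 + ‖x-ξ‖^2) ^ (-α-1)) (δ^2 + ‖x-ξ‖^2) := by
    have hpow := Real.hasDerivAt_rpow_const (x := δ^2 + ‖x-ξ‖^2) (p := α) (Or.inl hs.ne')
    have hne : (δ^2 + ‖x-ξ‖^2) ^ α ≠ 0 := by positivity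
    have h := (hasDerivAt_const (δ^2 + ‖x-ξ‖^2) C).div hpow hne
    refine h.congr_deriv ?_
    symm
    set s : ℝ := δ^2 + ‖x-ξ‖^2
    have e1 : (s ^ α)^2 = s ^ (2*α) := by
      rw [← Real.rpow_natCast (s ^ α) 2, ← Real.rpow_mul hs.le]; norm_num [mul_comm]
    rw [e1, zero_mul, zero_sub, div_eq_mul_inv, ← Real.rpow_neg hs.le]
    have e2 : (-α-1 : ℝ) = ((α-1) + -(2*α)) := by ring
    calc -(C*α) * s ^ (-α-1) = -(C*α) * s ^ ((α-1) + -(2*α)) := by rw [e2]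
      _ = -(C*α) * (s^(α-1) * s^(-(2*α))) := by rw [Real.rpow_add hs]
      _ = -(C * (α * s^(α-1))) * s^(-(2*α)) := by ring
  have hcomp := hφ.comp_hasFDerivAt x hq
  rw [hasGradientAt_iff_hasFDerivAt]
  have heq : (InnerProductSpace.toDual ℝ (Euc N))
      ((-(C * ((N:ℝ)-2)) * (δ^2 + ‖x-ξ‖^2) ^ (-(N:ℝ)/2)) • (x - ξ))
      = (-(C*α) * (δ^2 + ‖x-ξ‖^2) ^ (-α-1)) •
        ((fderivInnerCLM ℝ (x-ξ, x-ξ)).comp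
          ((ContinuousLinearMap.id ℝ (Euc N)).prod (ContinuousLinearMap.id ℝ (Euc N)))) := by
    apply ContinuousLinearMap.ext
    intro v
    rw [InnerProductSpace.toDual_apply_apply]
    simp only [ContinuousLinearMap.smul_apply, ContinuousLinearMap.comp_apply,
      ContinuousLinearMap.prod_apply, ContinuousLinearMap.id_apply, fderivInnerCLM_apply,
      smul_eq_mul, real_inner_smul_left]
    rw [real_inner_comm v (x-ξ)]
    have h1 : -α - 1 = -(N:ℝ)/2 := by rw [hα]; ring
    rw [← h1, hα]
    ring
  have hfun : stdBubble N δ ξ = (fun s : ℝ => C / s ^ α) ∘ (fun y : Euc N => δ^2 + ‖y-ξ‖^2) := by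
    funext y; rfl
  rw [hfun, heq]
  exact hcomp

lemma haus_sphere_toReal (N : ℕ) (hN : 1 ≤ N) (ξ : Euc N) {r : ℝ} (hr : 0 < r) :
    (μH[((N:ℝ)-1)] (Metric.sphere ξ r)).toReal = r ^ ((N:ℝ)-1) * omegaN N := by
  have hN' : (1:ℝ) ≤ N := by exact_mod_cast hN
  have hd : (0:ℝ) ≤ (N:ℝ)-1 := by linarith
  have h1 : Metric.sphere ξ r = (fun y => ξ + y) '' Metric.sphere (0:Euc N) r := by
    ext y
    simp only [Set.mem_image, mem_sphere_iff_norm, sub_zero]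
    constructor
    · intro hy; exact ⟨y - ξ, hy, by abel⟩
    · rintro ⟨z, hz, rfl⟩; simpa using hz
  have h2 : Metric.sphere (0:Euc N) r = (r:ℝ) • Metric.sphere (0:Euc N) 1 := by
    rw [smul_sphere' hr.ne', smul_zero, Real.norm_eq_abs, abs_of_pos hr, mul_one]
  have hiso : Isometry (fun y : Euc N => ξ + y) :=
    Isometry.of_dist_eq fun a b => by simp [dist_add_left]
  rw [h1, hiso.hausdorffMeasure_image (Or.inl hd), h2,
    MeasureTheory.Measure.hausdorffMeasure_smul₀ hd hr.ne',
    ENNReal.smul_def, smul_eq_mul, ENNReal.toReal_mul, ENNReal.coe_toReal,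
    NNReal.coe_rpow, coe_nnnorm, Real.norm_eq_abs, abs_of_pos hr]
  rfl

lemma keyIdent1 (e : ℝ) {d1 d2 r : ℝ} (h1 : 0 < d1) (h2 : 0 < d2) (hr : 0 < r)
    (hr2 : r^2 = d1*d2) :
    (d2 ^ ((e-2)/2))^2 * ((d2^2 + r^2) ^ (-e/2))^2 * (r^2 * (r * r ^ (e-1)))
      = (d2/d1) ^ ((e-2)/2) * ((1+d2/d1) ^ e)⁻¹ := by
  have hs2 : d2^2 + r^2 = d2 * (d1 + d2) := by rw [hr2]; ring
  have hd12 : 0 < d1 + d2 := by linarith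
  have ht : 0 < d2/d1 := by positivity
  have hu : 0 < 1 + d2/d1 := by positivity
  have hL : Real.log ((d2 ^ ((e-2)/2))^2 * ((d2^2 + r^2) ^ (-e/2))^2 * (r^2 * (r * r ^ (e-1))))
      = Real.log ((d2/d1) ^ ((e-2)/2) * ((1+d2/d1) ^ e)⁻¹) := by
    rw [hs2]
    have l1 : Real.log (d2 * (d1+d2)) = Real.log d2 + Real.log (d1+d2) :=
      Real.log_mul h2.ne' hd12.ne'
    have l2 : Real.log (d2/d1) = Real.log d2 - Real.log d1 := Real.log_div h2.ne' h1.ne'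
    have l3 : Real.log (1 + d2/d1) = Real.log (d1+d2) - Real.log d1 := by
      rw [show (1 + d2/d1 : ℝ) = (d1+d2)/d1 by field_simp]
      exact Real.log_div hd12.ne' h1.ne'
    have l4 : 2 * Real.log r = Real.log d1 + Real.log d2 := by
      have : Real.log (r^2) = Real.log d1 + Real.log d2 := by
        rw [hr2]; exact Real.log_mul h1.ne' h2.ne'
      rw [Real.log_pow] at this; push_cast at this; linarith
    rw [Real.log_mul (by positivity) (by positivity), Real.log_mul (by positivity) (by positivity),
        Real.log_mul (by positivity) (by positivity), Real.log_mul (by positivity) (by positivity),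
        Real.log_mul (by positivity) (by positivity),
        Real.log_pow, Real.log_pow, Real.log_pow, Real.log_inv,
        Real.log_rpow h2, Real.log_rpow (by positivity), Real.log_rpow hr, Real.log_rpow ht,
        Real.log_rpow hu, l1, l2, l3]
    push_cast
    linear_combination ((e+2)/2) * l4
  have h := congrArg Real.exp hL
  rwa [Real.exp_log (by positivity), Real.exp_log (by positivity)] at h

lemma keyIdent2 (e : ℝ) {d1 d2 r : ℝ} (h1 : 0 < d1) (h2 : 0 < d2) (hr : 0 < r)
    (hr2 : r^2 = d1*d2) :
    (d1 ^ ((e-2)/2) * d2 ^ ((e-2)/2)) * ((d1^2 + r^2) ^ (-e/2) * (d2^2 + r^2) ^ (-e/2)) *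
      (r^2 * (r * r ^ (e-1)))
      = (d2/d1) ^ (e/2) * ((1+d2/d1) ^ e)⁻¹ := by
  have hs1 : d1^2 + r^2 = d1 * (d1 + d2) := by rw [hr2]; ring
  have hs2 : d2^2 + r^2 = d2 * (d1 + d2) := by rw [hr2]; ring
  have hd12 : 0 < d1 + d2 := by linarith
  have ht : 0 < d2/d1 := by positivity
  have hu : 0 < 1 + d2/d1 := by positivity
  have hL : Real.log ((d1 ^ ((e-2)/2) * d2 ^ ((e-2)/2)) *
      ((d1^2 + r^2) ^ (-e/2) * (d2^2 + r^2) ^ (-e/2)) * (r^2 * (r * r ^ (e-1))))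
      = Real.log ((d2/d1) ^ (e/2) * ((1+d2/d1) ^ e)⁻¹) := by
    rw [hs1, hs2]
    have l1 : Real.log (d2 * (d1+d2)) = Real.log d2 + Real.log (d1+d2) :=
      Real.log_mul h2.ne' hd12.ne'
    have l1' : Real.log (d1 * (d1+d2)) = Real.log d1 + Real.log (d1+d2) :=
      Real.log_mul h1.ne' hd12.ne'
    have l2 : Real.log (d2/d1) = Real.log d2 - Real.log d1 := Real.log_div h2.ne' h1.ne'
    have l3 : Real.log (1 + d2/d1) = Real.log (d1+d2) - Real.log d1 := by
      rw [show (1 + d2/d1 : ℝ) = (d1+d2)/d1 by field_simp]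
      exact Real.log_div hd12.ne' h1.ne'
    have l4 : 2 * Real.log r = Real.log d1 + Real.log d2 := by
      have : Real.log (r^2) = Real.log d1 + Real.log d2 := by
        rw [hr2]; exact Real.log_mul h1.ne' h2.ne'
      rw [Real.log_pow] at this; push_cast at this; linarith
    rw [Real.log_mul (by positivity) (by positivity), Real.log_mul (by positivity) (by positivity),
        Real.log_mul (by positivity) (by positivity), Real.log_mul (by positivity) (by positivity),
        Real.log_mul (by positivity) (by positivity), Real.log_mul (by positivity) (by positivity),
        Real.log_mul (by positivity) (by positivity),
        Real.log_pow, Real.log_inv,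
        Real.log_rpow h1, Real.log_rpow h2, Real.log_rpow (by positivity),
        Real.log_rpow (by positivity), Real.log_rpow hr, Real.log_rpow ht,
        Real.log_rpow hu, l1, l1', l2, l3]
    push_cast
    linear_combination ((e+2)/2) * l4
  have h := congrArg Real.exp hL
  rwa [Real.exp_log (by positivity), Real.exp_log (by positivity)] at h

lemma pow_one_add_le (n : ℕ) {t : ℝ} (h0 : 0 ≤ t) (h1 : t ≤ 1) :
    (1+t)^n ≤ 1 + ((2:ℝ)^n - 1)*t := by
  induction n with
  | zero => simp
  | succ k ih =>
    have h2 : (1:ℝ) ≤ 2^k := one_le_pow₀ (by norm_num)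
    have h3 : (0:ℝ) ≤ 1 + t := by linarith
    have h4 := mul_le_mul_of_nonneg_right ih h3
    have h5 : t * t ≤ t := mul_le_of_le_one_left h0 h1
    calc (1+t)^(k+1) = (1+t)^k * (1+t) := pow_succ _ _
      _ ≤ (1 + ((2:ℝ)^k - 1)*t) * (1+t) := h4
      _ ≤ 1 + ((2:ℝ)^(k+1) - 1)*t := by
          rw [pow_succ]
          nlinarith [mul_le_mul_of_nonneg_left h5 (by linarith : (0:ℝ) ≤ 2^k - 1)]

lemma inv_bound (n : ℕ) {t : ℝ} (h0 : 0 ≤ t) (h1 : t ≤ 1) :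
    |((1+t)^n)⁻¹ - 1| ≤ ((2:ℝ)^n - 1) * t := by
  have hB : (1:ℝ) ≤ (1+t)^n := one_le_pow₀ (by linarith)
  have hBpos : (0:ℝ) < (1+t)^n := by positivity
  have hBB : (1+t)^n * ((1+t)^n)⁻¹ = 1 := mul_inv_cancel₀ hBpos.ne'
  have hinv1 : ((1+t)^n)⁻¹ ≤ 1 := inv_le_one_of_one_le₀ hB
  rw [abs_of_nonpos (by linarith)]
  have step1 : -(((1+t)^n)⁻¹ - 1) ≤ (1+t)^n - 1 := by
    nlinarith [sq_nonneg ((1+t)^n - 1), hBB, hBpos]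
  have step2 : (1+t)^n - 1 ≤ ((2:ℝ)^n - 1) * t := by
    have := pow_one_add_le n h0 h1; linarith
  linarith

lemma integral1_eq (N : ℕ) (hN : 3 ≤ N) (ξ : Euc N) {d1 d2 : ℝ} (h1 : 0 < d1) (h2 : 0 < d2) :
    (∫ x in Metric.sphere ξ (Real.sqrt (d1 * d2)),
        ‖gradient (stdBubble N d2 ξ) x‖ ^ 2 * ‖x - ξ‖ ∂(μH[((N:ℝ)-1)]))
      = bubbleConst N ^ 2 * ((N:ℝ)-2) ^ 2 * omegaN N *
          ((d2/d1) ^ (((N:ℝ)-2)/2) * ((1+d2/d1) ^ ((N:ℝ)))⁻¹) := by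
  have hdd : 0 < d1 * d2 := by positivity
  set r := Real.sqrt (d1 * d2) with hrdef
  have hr : 0 < r := Real.sqrt_pos.2 hdd
  have hr2 : r ^ 2 = d1 * d2 := Real.sq_sqrt hdd.le
  set K : ℝ := bubbleConst N * d2 ^ (((N:ℝ)-2)/2) * ((N:ℝ)-2) with hK
  have hconst : EqOn (fun x : Euc N => ‖gradient (stdBubble N d2 ξ) x‖ ^ 2 * ‖x - ξ‖)
      (fun _ : Euc N => K^2 * ((d2^2 + r^2) ^ (-(N:ℝ)/2))^2 * (r^2 * r)) (Metric.sphere ξ r) := by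
    intro x hx
    have hxr : ‖x - ξ‖ = r := mem_sphere_iff_norm.1 hx
    simp only
    rw [(hasGradientAt_stdBubble N d2 h2 ξ x).gradient, hxr, norm_smul, mul_pow,
      Real.norm_eq_abs, sq_abs, hxr]
    ring
  rw [setIntegral_congr_fun Metric.isClosed_sphere.measurableSet hconst, setIntegral_const,
    smul_eq_mul, measureReal_def, haus_sphere_toReal N (by omega) ξ hr]
  have hkey := keyIdent1 (N:ℝ) h1 h2 hr hr2
  calc r ^ ((N:ℝ)-1) * omegaN N * (K^2 * ((d2^2 + r^2) ^ (-(N:ℝ)/2))^2 * (r^2 * r))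
      = bubbleConst N ^ 2 * ((N:ℝ)-2) ^ 2 * omegaN N *
          ((d2 ^ (((N:ℝ)-2)/2))^2 * ((d2^2 + r^2) ^ (-(N:ℝ)/2))^2 *
            (r^2 * (r * r ^ ((N:ℝ)-1)))) := by rw [hK]; ring
    _ = _ := by rw [hkey]

lemma integral2_eq (N : ℕ) (hN : 3 ≤ N) (ξ : Euc N) {d1 d2 : ℝ} (h1 : 0 < d1) (h2 : 0 < d2) :
    (∫ x in Metric.sphere ξ (Real.sqrt (d1 * d2)),
        ⟪gradient (stdBubble N d1 ξ) x, gradient (stdBubble N d2 ξ) x⟫ * ‖x - ξ‖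
          ∂(μH[((N:ℝ)-1)]))
      = bubbleConst N ^ 2 * ((N:ℝ)-2) ^ 2 * omegaN N *
          ((d2/d1) ^ (((N:ℝ))/2) * ((1+d2/d1) ^ ((N:ℝ)))⁻¹) := by
  have hdd : 0 < d1 * d2 := by positivity
  set r := Real.sqrt (d1 * d2) with hrdef
  have hr : 0 < r := Real.sqrt_pos.2 hdd
  have hr2 : r ^ 2 = d1 * d2 := Real.sq_sqrt hdd.le
  set K1 : ℝ := bubbleConst N * d1 ^ (((N:ℝ)-2)/2) * ((N:ℝ)-2) with hK1
  set K2 : ℝ := bubbleConst N * d2 ^ (((N:ℝ)-2)/2) * ((N:ℝ)-2) with hK2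
  have hconst : EqOn
      (fun x : Euc N => ⟪gradient (stdBubble N d1 ξ) x, gradient (stdBubble N d2 ξ) x⟫ * ‖x - ξ‖)
      (fun _ : Euc N => (-K1 * (d1^2 + r^2) ^ (-(N:ℝ)/2)) * (-K2 * (d2^2 + r^2) ^ (-(N:ℝ)/2)) *
        (r^2 * r)) (Metric.sphere ξ r) := by
    intro x hx
    have hxr : ‖x - ξ‖ = r := mem_sphere_iff_norm.1 hx
    simp only
    rw [(hasGradientAt_stdBubble N d1 h1 ξ x).gradient,
      (hasGradientAt_stdBubble N d2 h2 ξ x).gradient, hxr,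
      real_inner_smul_left, real_inner_smul_right, real_inner_self_eq_norm_sq, hxr]
    ring
  rw [setIntegral_congr_fun Metric.isClosed_sphere.measurableSet hconst, setIntegral_const,
    smul_eq_mul, measureReal_def, haus_sphere_toReal N (by omega) ξ hr]
  have hkey := keyIdent2 (N:ℝ) h1 h2 hr hr2
  calc r ^ ((N:ℝ)-1) * omegaN N *
        ((-K1 * (d1^2 + r^2) ^ (-(N:ℝ)/2)) * (-K2 * (d2^2 + r^2) ^ (-(N:ℝ)/2)) * (r^2 * r))
      = bubbleConst N ^ 2 * ((N:ℝ)-2) ^ 2 * omegaN N *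
          ((d1 ^ (((N:ℝ)-2)/2) * d2 ^ (((N:ℝ)-2)/2)) *
            ((d1^2 + r^2) ^ (-(N:ℝ)/2) * (d2^2 + r^2) ^ (-(N:ℝ)/2)) *
            (r^2 * (r * r ^ ((N:ℝ)-1)))) := by rw [hK1, hK2]; ring
    _ = _ := by rw [hkey]


/-- with `r = √(δ₁δ₂)`,
`∫_{∂B_r(ξ)} |∇U_{δ₂,ξ}|² |x-ξ| dσ = α_N²(N-2)² ω_N (δ₂/δ₁)^{(N-2)/2} + O((δ₂/δ₁)^{N/2})` and
`∫_{∂B_r(ξ)} ∇U_{δ₁,ξ}·∇U_{δ₂,ξ} |x-ξ| dσ = α_N²(N-2)² ω_N (δ₂/δ₁)^{N/2} + O((δ₂/δ₁)^{(N+2)/2})`. -/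
theorem stmt17 (N : ℕ) (hN : 3 ≤ N) (ξ : Euc N)
    (δ₁ δ₂ : ℝ → ℝ)
    (hpos : ∀ᶠ lam in 𝓝[>] (0 : ℝ), 0 < δ₁ lam ∧ 0 < δ₂ lam)
    (hδ : δ₂ =o[𝓝[>] (0 : ℝ)] δ₁) :
    (∃ C > (0 : ℝ), ∀ᶠ lam in 𝓝[>] (0 : ℝ),
      |(∫ x in Metric.sphere ξ (Real.sqrt (δ₁ lam * δ₂ lam)),
          ‖gradient (stdBubble N (δ₂ lam) ξ) x‖ ^ 2 * ‖x - ξ‖ ∂(μH[((N : ℝ) - 1)]))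
        - bubbleConst N ^ 2 * ((N : ℝ) - 2) ^ 2 * omegaN N *
            (δ₂ lam / δ₁ lam) ^ (((N : ℝ) - 2) / 2)| ≤
        C * (δ₂ lam / δ₁ lam) ^ ((N : ℝ) / 2)) ∧
    (∃ C > (0 : ℝ), ∀ᶠ lam in 𝓝[>] (0 : ℝ),
      |(∫ x in Metric.sphere ξ (Real.sqrt (δ₁ lam * δ₂ lam)),
          ⟪gradient (stdBubble N (δ₁ lam) ξ) x, gradient (stdBubble N (δ₂ lam) ξ) x⟫ *
            ‖x - ξ‖ ∂(μH[((N : ℝ) - 1)]))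
        - bubbleConst N ^ 2 * ((N : ℝ) - 2) ^ 2 * omegaN N *
            (δ₂ lam / δ₁ lam) ^ ((N : ℝ) / 2)| ≤
        C * (δ₂ lam / δ₁ lam) ^ (((N : ℝ) + 2) / 2)) := by
  have hA : 0 ≤ bubbleConst N ^ 2 * ((N:ℝ)-2) ^ 2 * omegaN N :=
    mul_nonneg (mul_nonneg (sq_nonneg _) (sq_nonneg _)) ENNReal.toReal_nonneg
  set A := bubbleConst N ^ 2 * ((N:ℝ)-2) ^ 2 * omegaN N with hAdef
  have h2N : (0:ℝ) ≤ (2:ℝ)^N - 1 := by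
    have : (1:ℝ) ≤ 2^N := one_le_pow₀ (by norm_num)
    linarith
  have hCpos : (0:ℝ) < A * ((2:ℝ)^N - 1) + 1 := by
    have := mul_nonneg hA h2N; linarith
  have hbase : ∀ᶠ lam in 𝓝[>] (0 : ℝ),
      0 < δ₁ lam ∧ 0 < δ₂ lam ∧ δ₂ lam / δ₁ lam ≤ 1 := by
    filter_upwards [hpos, hδ.def one_pos] with lam hp hb
    refine ⟨hp.1, hp.2, ?_⟩
    rw [div_le_one hp.1]
    rw [Real.norm_eq_abs, Real.norm_eq_abs, abs_of_pos hp.2, abs_of_pos hp.1, one_mul] at hb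
    exact hb
  constructor
  · refine ⟨A * ((2:ℝ)^N - 1) + 1, hCpos, ?_⟩
    filter_upwards [hbase] with lam hp
    obtain ⟨h1, h2, ht1⟩ := hp
    have ht0 : 0 < δ₂ lam / δ₁ lam := div_pos h2 h1
    rw [integral1_eq N hN ξ h1 h2]
    set t := δ₂ lam / δ₁ lam with htdef
    rw [Real.rpow_natCast (1+t) N]
    have hq : (0:ℝ) ≤ t ^ (((N:ℝ)-2)/2) := Real.rpow_nonneg ht0.le _
    have habs : |A * (t ^ (((N:ℝ)-2)/2) * (((1+t):ℝ)^N)⁻¹) - A * t ^ (((N:ℝ)-2)/2)|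
        = (A * t ^ (((N:ℝ)-2)/2)) * |(((1+t):ℝ)^N)⁻¹ - 1| := by
      rw [show A * (t ^ (((N:ℝ)-2)/2) * (((1+t):ℝ)^N)⁻¹) - A * t ^ (((N:ℝ)-2)/2)
          = (A * t ^ (((N:ℝ)-2)/2)) * ((((1+t):ℝ)^N)⁻¹ - 1) from by ring, abs_mul,
        abs_of_nonneg (mul_nonneg hA hq)]
    rw [habs]
    calc (A * t ^ (((N:ℝ)-2)/2)) * |(((1+t):ℝ)^N)⁻¹ - 1|
        ≤ (A * t ^ (((N:ℝ)-2)/2)) * (((2:ℝ)^N - 1) * t) :=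
          mul_le_mul_of_nonneg_left (inv_bound N ht0.le ht1) (mul_nonneg hA hq)
      _ = (A * ((2:ℝ)^N - 1)) * (t ^ (((N:ℝ)-2)/2) * t) := by ring
      _ = (A * ((2:ℝ)^N - 1)) * t ^ ((N:ℝ)/2) := by
          rw [show ((N:ℝ)/2) = (((N:ℝ)-2)/2) + 1 from by ring, Real.rpow_add_one ht0.ne']
      _ ≤ (A * ((2:ℝ)^N - 1) + 1) * t ^ ((N:ℝ)/2) :=
          mul_le_mul_of_nonneg_right (by linarith) (Real.rpow_nonneg ht0.le _)
  · refine ⟨A * ((2:ℝ)^N - 1) + 1, hCpos, ?_⟩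
    filter_upwards [hbase] with lam hp
    obtain ⟨h1, h2, ht1⟩ := hp
    have ht0 : 0 < δ₂ lam / δ₁ lam := div_pos h2 h1
    rw [integral2_eq N hN ξ h1 h2]
    set t := δ₂ lam / δ₁ lam with htdef
    rw [Real.rpow_natCast (1+t) N]
    have hq : (0:ℝ) ≤ t ^ ((N:ℝ)/2) := Real.rpow_nonneg ht0.le _
    have habs : |A * (t ^ ((N:ℝ)/2) * (((1+t):ℝ)^N)⁻¹) - A * t ^ ((N:ℝ)/2)|
        = (A * t ^ ((N:ℝ)/2)) * |(((1+t):ℝ)^N)⁻¹ - 1| := by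
      rw [show A * (t ^ ((N:ℝ)/2) * (((1+t):ℝ)^N)⁻¹) - A * t ^ ((N:ℝ)/2)
          = (A * t ^ ((N:ℝ)/2)) * ((((1+t):ℝ)^N)⁻¹ - 1) from by ring, abs_mul,
        abs_of_nonneg (mul_nonneg hA hq)]
    rw [habs]
    calc (A * t ^ ((N:ℝ)/2)) * |(((1+t):ℝ)^N)⁻¹ - 1|
        ≤ (A * t ^ ((N:ℝ)/2)) * (((2:ℝ)^N - 1) * t) :=
          mul_le_mul_of_nonneg_left (inv_bound N ht0.le ht1) (mul_nonneg hA hq)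
      _ = (A * ((2:ℝ)^N - 1)) * (t ^ ((N:ℝ)/2) * t) := by ring
      _ = (A * ((2:ℝ)^N - 1)) * t ^ (((N:ℝ)+2)/2) := by
          rw [show (((N:ℝ)+2)/2) = ((N:ℝ)/2) + 1 from by ring, Real.rpow_add_one ht0.ne']
      _ ≤ (A * ((2:ℝ)^N - 1) + 1) * t ^ (((N:ℝ)+2)/2) :=
          mul_le_mul_of_nonneg_right (by linarith) (Real.rpow_nonneg ht0.le _)
end
end

section
/- Let N ≥ 5 and let Ω ⊂ ℝ^N be a bounded domain with smooth boundary containing a point ξ. Then, as δ → 0, ∫_Ω U_{δ,ξ}² dx = α_N² δ² ∫_{ℝ^N} (1+|y|²)^{−(N−2)} dy + O(δ^{N−2}). -/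
open MeasureTheory Filter Topology Asymptotics Set
open scoped RealInnerProductSpace ENNReal NNReal

noncomputable section

set_option maxHeartbeats 2000000 in
/-- for `N ≥ 5`,
`∫_Ω U_{δ,ξ}² dx = α_N² δ² ∫_{ℝ^N} (1+|y|²)^{-(N-2)} dy + O(δ^{N-2})` as `δ → 0⁺`. -/
theorem stmt18 (N : ℕ) (hN : 5 ≤ N)
    (Ω : Set (Euc N)) (hΩo : IsOpen Ω) (hΩconn : IsConnected Ω)
    (hΩbd : Bornology.IsBounded Ω) (hΩsm : HasSmoothBoundary Ω)
    (ξ : Euc N) (hξ : ξ ∈ Ω) :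
    ∃ C > (0 : ℝ), ∀ᶠ δ in 𝓝[>] (0 : ℝ),
      |(∫ x in Ω, stdBubble N δ ξ x ^ 2)
        - bubbleConst N ^ 2 * δ ^ 2 * ∫ y : Euc N, (1 + ‖y‖ ^ 2) ^ (-((N : ℝ) - 2))| ≤
        C * δ ^ ((N : ℝ) - 2) := by
  
  have hn5 : (5 : ℝ) ≤ (N : ℝ) := by exact_mod_cast hN
  set n : ℝ := (N : ℝ) with hn
  set s : ℝ := n - 2 with hs
  have hs3 : (3 : ℝ) ≤ s := by simp [hs]; linarith
  have hs0 : 0 < s := by linarith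
  have hfinrank : (Module.finrank ℝ (Euc N) : ℝ) = n := by
    rw [finrank_euclideanSpace_fin]
  have h2s : (Module.finrank ℝ (Euc N) : ℝ) < 2 * s := by
    rw [hfinrank]; simp [hs]; linarith
  set g : Euc N → ℝ := fun y => (1 + ‖y‖ ^ 2) ^ (-s) with hg
  have hg_int : Integrable g := by
    have := integrable_rpow_neg_one_add_norm_sq (E := Euc N) (μ := volume) h2s
    convert this using 2 with y
    ring_nf
    rfl
  set I : ℝ := ∫ y : Euc N, g y with hI
  -- radius
  obtain ⟨r, hr0, hball⟩ := Metric.isOpen_iff.1 hΩo ξ hξ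
  set c : ℝ := r / (1 + r) with hc
  have hc0 : 0 < c := by positivity
  set K : ℝ := (c ^ 2) ^ (-s) with hK
  have hK0 : 0 < K := by positivity
  -- integral of (1+‖x‖)^(-2s)
  set J : ℝ := ∫ x : Euc N, (1 + ‖x‖) ^ (-(2 * s)) with hJ
  have hJ_int : Integrable (fun x : Euc N => (1 + ‖x‖) ^ (-(2 * s))) :=
    integrable_one_add_norm h2s
  have hJ0 : 0 ≤ J :=
    integral_nonneg fun x => Real.rpow_nonneg (by positivity) _
  refine ⟨bubbleConst N ^ 2 * (K * J) + 1, by positivity, ?_⟩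
  filter_upwards [self_mem_nhdsWithin] with δ (hδ : 0 < δ)
  set F : Euc N → ℝ := fun x => (δ ^ 2 + ‖x - ξ‖ ^ 2) ^ (-s) with hF
  -- scaling identity pointwise
  have hptF : ∀ z : Euc N, (δ ^ 2 + ‖z‖ ^ 2) ^ (-s) = δ ^ (-(2 * s)) * g (δ⁻¹ • z) := by
    intro z
    have hz : ‖δ⁻¹ • z‖ ^ 2 = δ⁻¹ ^ 2 * ‖z‖ ^ 2 := by
      rw [norm_smul]; simp [mul_pow, abs_of_pos hδ]
    have hb : δ ^ 2 + ‖z‖ ^ 2 = δ ^ 2 * (1 + ‖δ⁻¹ • z‖ ^ 2) := by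
      rw [hz]; field_simp
    rw [hg, hb, Real.mul_rpow (by positivity) (by positivity)]
    congr 1
    rw [← Real.rpow_natCast δ 2, ← Real.rpow_mul hδ.le]
    norm_num
  have hF_int : Integrable F := by
    have h1 : Integrable (fun z : Euc N => (δ ^ 2 + ‖z‖ ^ 2) ^ (-s)) := by
      simp_rw [hptF]
      exact (hg_int.comp_smul (inv_ne_zero hδ.ne')).const_mul _
    exact h1.comp_sub_right ξ
  -- value of full-space integral
  have hint_full : ∫ x : Euc N, F x = δ ^ (-(2 * s) + n) * I := by
    have h1 : ∫ x : Euc N, F x = ∫ z : Euc N, (δ ^ 2 + ‖z‖ ^ 2) ^ (-s) := by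
      exact integral_sub_right_eq_self (fun z => (δ ^ 2 + ‖z‖ ^ 2) ^ (-s)) ξ
    rw [h1]
    simp_rw [hptF]
    rw [integral_const_mul, Measure.integral_comp_inv_smul_of_nonneg volume g hδ.le,
      finrank_euclideanSpace_fin, smul_eq_mul, ← hI, ← mul_assoc]
    congr 1
    rw [← Real.rpow_natCast δ N, ← Real.rpow_add hδ]
  -- pointwise bubble squared
  have hpt : ∀ x : Euc N, stdBubble N δ ξ x ^ 2
      = bubbleConst N ^ 2 * δ ^ s * F x := by
    intro x
    have hb0 : (0:ℝ) < δ ^ 2 + ‖x - ξ‖ ^ 2 := by positivity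
    have e1 : (δ ^ (s / 2)) ^ 2 = δ ^ s := by
      rw [← Real.rpow_natCast (δ ^ (s/2)) 2, ← Real.rpow_mul hδ.le]
      norm_num
    have e2 : ((δ ^ 2 + ‖x - ξ‖ ^ 2) ^ (s / 2)) ^ 2 = (δ ^ 2 + ‖x - ξ‖ ^ 2) ^ s := by
      rw [← Real.rpow_natCast _ 2, ← Real.rpow_mul hb0.le]
      norm_num
    show stdBubble N δ ξ x ^ 2 = bubbleConst N ^ 2 * δ ^ s * (δ ^ 2 + ‖x - ξ‖ ^ 2) ^ (-s)
    rw [stdBubble, div_pow, mul_pow, e1, e2, Real.rpow_neg hb0.le, div_eq_mul_inv]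
  simp_rw [hpt]
  rw [integral_const_mul]
  have hsplit : ∫ x in Ω, F x = (∫ x : Euc N, F x) - ∫ x in Ωᶜ, F x := by
    have := integral_add_compl hΩo.measurableSet hF_int
    linarith
  have hδ2 : bubbleConst N ^ 2 * δ ^ 2 * I = bubbleConst N ^ 2 * δ ^ s * (δ ^ (-(2*s) + n) * I) := by
    rw [mul_assoc, mul_assoc]
    congr 1
    rw [← mul_assoc, ← Real.rpow_add hδ]
    have : s + (-(2*s) + n) = 2 := by rw [hs]; ring
    rw [this]
    congr 1
    rw [← Real.rpow_natCast δ 2]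
    norm_num
  rw [hsplit, hδ2, hint_full]
  have hT0 : 0 ≤ ∫ x in Ωᶜ, F x :=
    setIntegral_nonneg hΩo.measurableSet.compl
      (fun x _ => Real.rpow_nonneg (by positivity) _)
  have habs : |bubbleConst N ^ 2 * δ ^ s * ((∫ x : Euc N, F x) - ∫ x in Ωᶜ, F x)
      - bubbleConst N ^ 2 * δ ^ s * ∫ x : Euc N, F x|
      = bubbleConst N ^ 2 * δ ^ s * ∫ x in Ωᶜ, F x := by
    rw [← mul_sub]
    have : (∫ x : Euc N, F x) - (∫ x in Ωᶜ, F x) - ∫ x : Euc N, F x = -(∫ x in Ωᶜ, F x) := by ring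
    rw [this, mul_neg, abs_neg, abs_of_nonneg]
    have : (0:ℝ) ≤ bubbleConst N ^ 2 * δ ^ s := by positivity
    exact mul_nonneg this hT0
  rw [hint_full] at habs
  rw [habs]
  -- bound the complement integral
  have hbound : ∫ x in Ωᶜ, F x ≤ K * J := by
    have hmaj : ∀ x ∈ Ωᶜ, F x ≤ K * (1 + ‖x - ξ‖) ^ (-(2 * s)) := by
      intro x hx
      have hr_le : r ≤ ‖x - ξ‖ := by
        by_contra h
        push_neg at h
        exact hx (hball (by simpa [Metric.mem_ball, dist_eq_norm] using h))
      set a : ℝ := ‖x - ξ‖ with ha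
      have ha0 : 0 ≤ a := norm_nonneg _
      have hca : c * (1 + a) ≤ a := by
        rw [hc, div_mul_eq_mul_div, div_le_iff₀ (by positivity)]
        nlinarith
      have hlow : c ^ 2 * (1 + a) ^ 2 ≤ δ ^ 2 + a ^ 2 := by
        have h := mul_self_le_mul_self (mul_nonneg hc0.le (by linarith : (0:ℝ) ≤ 1 + a)) hca
        nlinarith [sq_nonneg δ]
      have h1 : F x ≤ (c ^ 2 * (1 + a) ^ 2) ^ (-s) := by
        rw [hF]
        exact Real.rpow_le_rpow_of_nonpos (by positivity) hlow (by linarith)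
      have h2 : (c ^ 2 * (1 + a) ^ 2) ^ (-s) = K * (1 + a) ^ (-(2 * s)) := by
        rw [Real.mul_rpow (by positivity) (by positivity), hK]
        congr 1
        rw [← Real.rpow_natCast (1+a) 2, ← Real.rpow_mul (by positivity)]
        norm_num
      rw [h2] at h1
      exact h1
    have hmaj_int : Integrable (fun x : Euc N => K * (1 + ‖x - ξ‖) ^ (-(2 * s))) :=
      (hJ_int.comp_sub_right ξ).const_mul K
    calc ∫ x in Ωᶜ, F x ≤ ∫ x in Ωᶜ, K * (1 + ‖x - ξ‖) ^ (-(2 * s)) := by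
          refine setIntegral_mono_on hF_int.integrableOn hmaj_int.integrableOn
            hΩo.measurableSet.compl hmaj
      _ ≤ ∫ x : Euc N, K * (1 + ‖x - ξ‖) ^ (-(2 * s)) := by
          refine setIntegral_le_integral hmaj_int (Eventually.of_forall fun x => ?_)
          positivity
      _ = K * J := by
          rw [integral_const_mul]
          congr 1
          exact integral_sub_right_eq_self (fun z => (1 + ‖z‖) ^ (-(2*s))) ξ
  calc bubbleConst N ^ 2 * δ ^ s * ∫ x in Ωᶜ, F x
      ≤ bubbleConst N ^ 2 * δ ^ s * (K * J) := by
        apply mul_le_mul_of_nonneg_left hbound (by positivity)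
    _ ≤ (bubbleConst N ^ 2 * (K * J) + 1) * δ ^ s := by
        have hδs : (0:ℝ) < δ ^ s := Real.rpow_pos_of_pos hδ _
        nlinarith
end
end
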